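/- arXiv:math/0701232 — 5 statements merged into one kernel-verified Lean document; each statement's English description precedes it below -/
import Mathlib

section
/- Let n be a positive integer and let k be an odd divisor of n with k^2 > 2n. Then the sequence (k−1)/2 − n/k + 1, (k−1)/2 − n/k + 2, ..., n/k + (k−1)/2 is a decomposition of n of length 2n/k (in particular, of even length). -/
/-- The length spectrum of `n`: the set of lengths `l` of decompositions of `n`,
i.e. sequences `a, a+1, ..., a+(l-1)` of `l ≥ 1` consecutive positive integers summing to `n`. -/
def lspec (n : ℕ) : Set ℕ :=
  {l | 0 < l ∧ ∃ a : ℕ, 0 < a ∧ ∑ i ∈ Finset.range l, (a + i) = n}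

/-- `A₀`: the even elements of `A`. -/
def evens (A : Set ℕ) : Set ℕ := {x ∈ A | Even x}

/-- `A₁`: the odd elements of `A`. -/
def odds (A : Set ℕ) : Set ℕ := {x ∈ A | Odd x}

/-- The spectral class of `n`: positive integers with the same length spectrum as `n`. -/
def specClass (n : ℕ) : Set ℕ := {m | 0 < m ∧ lspec m = lspec n}

/-- A set is balanced if it has equally many even and odd elements. -/
def balancedSet (S : Set ℕ) : Prop := (evens S).encard = (odds S).encard

/-- A set is unmixed if it has no even elements. -/
def unmixedSet (S : Set ℕ) : Prop := evens S = ∅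

/-- A set is lopsided if it is neither balanced nor unmixed. -/
def lopsidedSet (S : Set ℕ) : Prop := ¬ balancedSet S ∧ ¬ unmixedSet S

/-- The set of ratios `m'/m` over pairs of complementary factors `m ≤ m'` of `k`;
`q(k)` is the least element of this set. -/
def qSet (k : ℕ) : Set ℚ :=
  {r | ∃ m m' : ℕ, 0 < m ∧ m ≤ m' ∧ m * m' = k ∧ r = (m' : ℚ) / (m : ℚ)}

/-- The exceptional set `E(S)`: numbers `a = b·c` with `b, c ∈ S₁`, `a > max S₀`, and
whose set of divisors of `(max S₁)·a` strictly below `a` is exactly `S₁`. -/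
def excSet (S : Set ℕ) : Set ℕ :=
  {a | (∃ b ∈ odds S, ∃ c ∈ odds S, a = b * c) ∧ sSup (evens S) < a ∧
    {d | d ∣ sSup (odds S) * a ∧ d < a} = odds S}

/-- `P(S)`: the primes strictly greater than `max S₀`. -/
def primesAbove (S : Set ℕ) : Set ℕ := {p | p.Prime ∧ sSup (evens S) < p}

/-- A balanced spectrum is non-excessive if `S₁` is exactly the set of divisors of `max S₁`. -/
def nonExcessive (S : Set ℕ) : Prop := odds S = {d | d ∣ sSup (odds S)}

/-- `γ_p`: the largest `k` with `p^k ∈ S₁`. -/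
noncomputable def gammaIdx (S : Set ℕ) (p : ℕ) : ℕ := sSup {k | p ^ k ∈ odds S}

/-- `μ_p = v_p(max S₁)`. -/
noncomputable def muIdx (S : Set ℕ) (p : ℕ) : ℕ := (sSup (odds S)).factorization p

/-- The excessive index `ε_p = γ_p − μ_p` of a prime `p` with respect to `S`. -/
noncomputable def excIdx (S : Set ℕ) (p : ℕ) : ℕ := gammaIdx S p - muIdx S p

/-- The difference set `D(S)`: `S₁` with its `|S₀|` smallest elements removed when
`|S₀| ≤ |S₁|`, and empty otherwise.  An element `x` of `S₁` survives exactly when at least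
`|S₀|` elements of `S₁` lie strictly below it. -/
def diffSet (S : Set ℕ) : Set ℕ :=
  {x ∈ odds S | (evens S).encard ≤ {y ∈ odds S | y < x}.encard}

/-- Pairing `a + i` with `a + (2m - 1 - i)` gives `m` pairs, each summing to `2(a + m) - 1`. -/
theorem sum_range_two_mul_add (a m : ℕ) :
    ∑ i ∈ Finset.range (2 * m), (a + i) = m * (2 * (a + m) - 1) := by
  have gauss : (∑ i ∈ Finset.range (2 * m), i) * 2 = 2 * m * (2 * m - 1) :=
    Finset.sum_range_id_mul_two (2 * m)
  rw [Finset.sum_add_distrib, Finset.sum_const, Finset.card_range, smul_eq_mul]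
  rcases Nat.eq_zero_or_pos m with rfl | hm
  · simp
  · have : 2 * (a + m) - 1 = 2 * a + (2 * m - 1) := by omega
    rw [this]
    nlinarith

theorem odd_factor_gives_even_decomposition_general (n k : ℕ) (hk : Odd k)
    (hdvd : k ∣ n) (hgt : 2 * n < k ^ 2) :
    0 < (k - 1) / 2 - n / k + 1 ∧
      ∑ i ∈ Finset.range (2 * n / k), ((k - 1) / 2 - n / k + 1 + i) = n ∧
      Even (2 * n / k) := by
  obtain ⟨m, rfl⟩ := hdvd
  have hk0 : 0 < k := hk.pos
  have hquot : k * m / k = m := Nat.mul_div_cancel_left m hk0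
  have hlen : 2 * (k * m) / k = 2 * m := by
    rw [Nat.mul_left_comm, Nat.mul_div_cancel_left _ hk0]
  have hmk : 2 * m < k := lt_of_mul_lt_mul_left (by nlinarith : k * (2 * m) < k * k) hk0.le
  -- `m ≤ (k - 1) / 2`, so the run ends at `(k - 1) / 2 + m` and its middle pair sums to `k`
  have hmiddle : 2 * ((k - 1) / 2 - m + 1 + m) - 1 = k := by
    obtain ⟨j, rfl⟩ := hk
    omega
  rw [hquot, hlen]
  refine ⟨Nat.succ_pos _, ?_, even_two_mul m⟩
  rw [sum_range_two_mul_add, hmiddle, Nat.mul_comm]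

/-- If `k` is an odd divisor of `n` with `k² > 2n`, then the `2n/k` consecutive integers
starting at `(k−1)/2 − n/k + 1` are positive and sum to `n`: an even decomposition of
length `2n/k`. -/
theorem odd_factor_gives_even_decomposition (n k : ℕ) (hn : 0 < n) (hk : Odd k)
    (hdvd : k ∣ n) (hgt : 2 * n < k ^ 2) :
    0 < (k - 1) / 2 - n / k + 1 ∧
      ∑ i ∈ Finset.range (2 * n / k), ((k - 1) / 2 - n / k + 1 + i) = n ∧
      Even (2 * n / k) :=
  odd_factor_gives_even_decomposition_general n k hk hdvd hgt
end

section
/- For every positive integer n, lspec(n) = {k : k odd, k divides n, k^2 < 2n} ∪ {2n/k : k odd, k divides n, k^2 > 2n}. Equivalently, every decomposition of n of odd length l satisfies that l divides n and l^2 < 2n, and every decomposition of n of even length l satisfies that k := 2n/l is an odd divisor of n with k^2 > 2n. -/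
/-! A decomposition of `n` of length `l` starting at `a` is the same as the factorisation
`2n = l · m` with `m = 2a + l - 1`: the factors have opposite parity and `l < m`. Exactly one
of `l`, `m` is odd, and that one divides `n`: when it is `l` we have `l² < lm = 2n`, and when
it is `m` we have `m² > 2n` and `l = 2n/m`. -/

lemma two_mul_sum_range_add_add (a l : ℕ) :
    2 * ∑ i ∈ Finset.range l, (a + i) + l = l * (2 * a + l) := by
  induction l with
  | zero => simp
  | succ l ih =>
    rw [Finset.sum_range_succ]
    nlinarith [ih]

lemma mem_lspec_iff {n l : ℕ} :
    l ∈ lspec n ↔ 0 < l ∧ ∃ m, l < m ∧ Odd (l + m) ∧ l * m = 2 * n := by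
  refine ⟨fun ⟨hl, a, ha, hsum⟩ ↦ ⟨hl, 2 * a + l - 1, by omega, ⟨a + l - 1, by omega⟩, ?_⟩,
    fun ⟨hl, m, hlm, ⟨j, hj⟩, hmul⟩ ↦ ⟨hl, j + 1 - l, by omega, ?_⟩⟩
  · have key := two_mul_sum_range_add_add a l
    rw [hsum, show 2 * a + l = (2 * a + l - 1) + 1 by omega, Nat.mul_succ] at key
    omega
  · have key := two_mul_sum_range_add_add (j + 1 - l) l
    rw [show 2 * (j + 1 - l) + l = m + 1 by omega, Nat.mul_succ] at key
    omega

lemma Odd.dvd_of_mul_eq_two_mul {k m n : ℕ} (hk : Odd k) (h : k * m = 2 * n) : k ∣ n :=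
  hk.coprime_two_right.dvd_of_dvd_mul_left ⟨m, by rw [h, mul_comm]⟩

/-- The length spectrum of `n` consists of the odd divisors `k` of `n` with `k² < 2n`
together with the numbers `2n/k` for odd divisors `k` of `n` with `k² > 2n`. -/
theorem lspec_eq (n : ℕ) (hn : 0 < n) :
    lspec n = {k | Odd k ∧ k ∣ n ∧ k ^ 2 < 2 * n} ∪
      {l | ∃ k : ℕ, Odd k ∧ k ∣ n ∧ 2 * n < k ^ 2 ∧ l = 2 * n / k} := by
  ext l
  rw [mem_lspec_iff]
  constructor
  · rintro ⟨hl, m, hlm, hodd, hmul⟩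
    rcases Nat.even_or_odd l with hle | hlo
    · have hmo : Odd m := (Nat.odd_add'.mp hodd).mpr hle
      refine Or.inr ⟨m, hmo, hmo.dvd_of_mul_eq_two_mul (by rw [mul_comm, hmul]), by nlinarith, ?_⟩
      rw [← hmul, Nat.mul_div_cancel _ hmo.pos]
    · exact Or.inl ⟨hlo, hlo.dvd_of_mul_eq_two_mul hmul, by nlinarith⟩
  · rintro (⟨hk, ⟨t, rfl⟩, hlt⟩ | ⟨k, hk, ⟨t, rfl⟩, hlt, rfl⟩)
    · exact ⟨hk.pos, 2 * t, by nlinarith, hk.add_even (even_two_mul t), by ring⟩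
    · rw [show 2 * (k * t) = 2 * t * k by ring, Nat.mul_div_cancel _ hk.pos]
      have ht : 0 < t := Nat.pos_of_mul_pos_left hn
      exact ⟨by omega, k, by nlinarith, (even_two_mul t).add_odd hk, rfl⟩
end

section
/- Let n be a positive integer and let e be an even element of lspec(n). Then v₂(n) = v₂(e) − 1, where v₂ denotes the 2-adic valuation. In particular, if n has an even decomposition, then the highest power of 2 dividing n is half the least even element of lspec(n). -/
lemma sum_consec (l b : ℕ) : 2 * (∑ i ∈ Finset.range l, (b + i)) + l = l * (2 * b + l) := by
  induction l with
  | zero => simp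
  | succ k ih =>
    rw [Finset.sum_range_succ]
    have h : (k + 1) * (2 * b + (k + 1)) = k * (2 * b + k) + 2 * b + 2 * k + 1 := by ring
    rw [h]
    linarith [ih]

lemma spec_decomp {n x : ℕ} (hx : x ∈ lspec n) :
    ∃ m, x + 1 ≤ m ∧ 2 * n = x * m ∧ (Even x → ¬ 2 ∣ m) := by
  obtain ⟨hxpos, a, ha, hs⟩ := hx
  have key := sum_consec x a
  rw [hs] at key
  refine ⟨2 * a + x - 1, by omega, ?_, ?_⟩
  · have hc : 2 * a + x = (2 * a + x - 1) + 1 := by omega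
    rw [hc, Nat.mul_add, Nat.mul_one] at key
    omega
  · rintro ⟨k, hk⟩ ⟨j, hj⟩
    omega

lemma mem_lspec_of {n l M : ℕ} (hl : 0 < l) (hM : l + 1 ≤ M) (h2n : 2 * n = l * M)
    (hpar : 2 ∣ (M + 1 - l)) : l ∈ lspec n := by
  obtain ⟨b, hb⟩ : ∃ b, M + 1 - l = 2 * b := hpar
  refine ⟨hl, b, by omega, ?_⟩
  have key := sum_consec l b
  have h1 : 2 * b + l = M + 1 := by omega
  rw [h1, Nat.mul_add, Nat.mul_one, ← h2n] at key
  omega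

lemma val_of_even {n x : ℕ} (hn : 0 < n) (hx : x ∈ lspec n) (hxe : Even x) :
    x.factorization 2 = n.factorization 2 + 1 := by
  obtain ⟨m, hm1, h2n, hodd⟩ := spec_decomp hx
  have hxpos : 0 < x := hx.1
  have hmodd := hodd hxe
  have key : (2 * n).factorization 2 = (x * m).factorization 2 := by rw [h2n]
  rw [Nat.factorization_mul two_ne_zero hn.ne',
    Nat.factorization_mul hxpos.ne' (by omega)] at key
  simp [Nat.factorization_eq_zero_of_not_dvd hmodd,
    Nat.Prime.factorization_self Nat.prime_two] at key
  omega

/-- If `e` is an even element of `lspec n` then `v₂(n) = v₂(e) − 1`; in particular the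
highest power of `2` dividing `n` is half the least even element of `lspec n`. -/
theorem two_adic_val_of_even_spec (n e : ℕ) (hn : 0 < n) (he : e ∈ lspec n)
    (heven : Even e) :
    n.factorization 2 = e.factorization 2 - 1 ∧
      2 ^ (n.factorization 2) = sInf (evens (lspec n)) / 2 := by
  set v := n.factorization 2 with hv
  have hev : e.factorization 2 = v + 1 := val_of_even hn he heven
  refine ⟨by omega, ?_⟩
  set t := v + 1 with ht
  -- valuation of 2n
  have hfact : (2 * n).factorization 2 = t := by
    rw [Nat.factorization_mul two_ne_zero hn.ne']
    simp [Nat.Prime.factorization_self Nat.prime_two, ht, hv]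
    omega
  have h2npos : 2 * n ≠ 0 := by omega
  -- 2^t divides 2n
  have hdvd : 2 ^ t ∣ 2 * n := by
    rw [← hfact]; exact Nat.ordProj_dvd (2 * n) 2
  set M := 2 * n / 2 ^ t with hM
  have h2n : 2 * n = 2 ^ t * M := (Nat.mul_div_cancel' hdvd).symm
  have hModd : ¬ 2 ∣ M := by
    have := Nat.not_dvd_ordCompl Nat.prime_two h2npos
    rwa [hfact] at this
  -- e = 2^t * e', so 2^t ≤ e
  have hedvd : 2 ^ t ∣ e := by
    rw [← hev]; exact Nat.ordProj_dvd e 2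
  have hepos : 0 < e := he.1
  have hle : 2 ^ t ≤ e := Nat.le_of_dvd hepos hedvd
  -- M ≥ 2^t + 1
  obtain ⟨m, hm1, h2n', _⟩ := spec_decomp he
  have hMbig : 2 ^ t + 1 ≤ M := by
    have h1 : 2 ^ t * (2 ^ t + 1) ≤ e * m := Nat.mul_le_mul hle (by omega)
    have h2 : 2 ^ t * (2 ^ t + 1) ≤ 2 ^ t * M := by omega
    exact Nat.le_of_mul_le_mul_left h2 (Nat.pow_pos (by norm_num : 0 < 2))
  have htpos : (2 : ℕ) ∣ 2 ^ t := dvd_pow_self 2 (by omega : t ≠ 0)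
  have hpar : 2 ∣ (M + 1 - 2 ^ t) := by
    obtain ⟨k, hk⟩ := htpos
    omega
  have hLmem : 2 ^ t ∈ evens (lspec n) := by
    refine ⟨mem_lspec_of (Nat.pow_pos (by norm_num : 0 < 2)) hMbig h2n hpar, ?_⟩
    obtain ⟨k, hk⟩ := htpos
    exact ⟨k, by omega⟩
  have hlb : ∀ x ∈ evens (lspec n), 2 ^ t ≤ x := by
    rintro x ⟨hx, hxe⟩
    have := val_of_even hn hx hxe
    have hxt : x.factorization 2 = t := by rw [this, ht]
    have hxd : 2 ^ t ∣ x := by rw [← hxt]; exact Nat.ordProj_dvd x 2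
    exact Nat.le_of_dvd hx.1 hxd
  have hsinf : sInf (evens (lspec n)) = 2 ^ t :=
    le_antisymm (Nat.sInf_le hLmem) (hlb _ (Nat.sInf_mem ⟨_, hLmem⟩))
  rw [hsinf, ht, pow_succ, Nat.mul_div_cancel _ (by norm_num)]
end

section
/- Let n be a positive integer such that S = lspec(n) is balanced, and let a ∈ E(S). Then: (i) a has a prime factor strictly smaller than a; in particular, a is not prime; (ii) every divisor of a other than a itself belongs to S₁; (iii) a/m₁ = q(m₁·a). -/
/-!
Write `m₁ = max S₁`. The last condition defining `E(S)` makes `S₁` the set of divisors of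
`m₁·a` below `a`, so `S₁` is bounded by `a` and `m₁ < a`. Then `a = b·c` with `b, c ∈ S₁` is a
factorization into factors smaller than `a`, and in any factorization `m·m' = m₁·a` with
`m ≤ m'` we have `m < a`, hence `m ∈ S₁` and `m ≤ m₁`, which gives `m'/m ≥ a/m₁`.
-/

theorem Nat.exists_prime_dvd_lt_of_mul_eq {a b c : ℕ} (habc : b * c = a) (hb : b < a)
    (hc : c < a) : ∃ p : ℕ, p.Prime ∧ p ∣ a ∧ p < a := by
  have hb0 : b ≠ 0 := by rintro rfl; omega
  have hb1 : b ≠ 1 := by rintro rfl; omega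
  exact ⟨b.minFac, Nat.minFac_prime hb1, (Nat.minFac_dvd b).trans ⟨c, habc.symm⟩,
    (Nat.minFac_le (Nat.pos_of_ne_zero hb0)).trans_lt hb⟩

theorem isLeast_qSet_mul {m a : ℕ} (hm : 0 < m) (hma : m ≤ a)
    (hmax : ∀ d, d ∣ m * a → d < a → d ≤ m) : IsLeast (qSet (m * a)) ((a : ℚ) / m) := by
  refine ⟨⟨m, a, hm, hma, rfl, rfl⟩, ?_⟩
  rintro _ ⟨d, d', hd, hdd', hprod, rfl⟩
  have hdm : d ≤ m := by
    rcases lt_or_ge d a with hda | had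
    · exact hmax d ⟨d', hprod.symm⟩ hda
    · -- `a² ≤ d² ≤ d·d' = m·a ≤ a²` forces `d = d' = a = m`
      nlinarith
  -- cross-multiplied, `a·d ≤ d'·m` follows from `d·d' = m·a` and `d² ≤ m²`
  have key : a * d ≤ d' * m := by
    refine Nat.le_of_mul_le_mul_right ?_ hd
    calc a * d * d = a * (d * d) := mul_assoc _ _ _
      _ ≤ a * (m * m) := by gcongr
      _ = m * (d * d') := by rw [hprod]; ring
      _ = d' * m * d := by ring
  rw [div_le_div_iff₀ (by exact_mod_cast hm) (by exact_mod_cast hd)]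
  exact_mod_cast key

namespace DivisorsBelow

variable {T : Set ℕ} {a : ℕ} (hT : {d | d ∣ sSup T * a ∧ d < a} = T)
include hT

theorem mem_iff {d : ℕ} : d ∈ T ↔ d ∣ sSup T * a ∧ d < a :=
  (Set.ext_iff.mp hT d).symm

theorem bddAbove : BddAbove T :=
  ⟨a, fun _ hd => ((mem_iff hT).mp hd).2.le⟩

theorem sSup_lt (hne : T.Nonempty) : sSup T < a :=
  ((mem_iff hT).mp (Nat.sSup_mem hne (bddAbove hT))).2

theorem mem_of_dvd {d : ℕ} (ha : 0 < a) (hd : d ∣ a) (hda : d ≠ a) : d ∈ T :=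
  (mem_iff hT).mpr ⟨hd.mul_left _, (Nat.le_of_dvd ha hd).lt_of_ne hda⟩

theorem isLeast_qSet {b : ℕ} (hb : b ∈ T) (hb0 : 0 < b) :
    IsLeast (qSet (sSup T * a)) ((a : ℚ) / (sSup T : ℕ)) :=
  isLeast_qSet_mul (hb0.trans_le (le_csSup (bddAbove hT) hb)) (sSup_lt hT ⟨b, hb⟩).le
    fun _ hd hda => le_csSup (bddAbove hT) ((mem_iff hT).mpr ⟨hd, hda⟩)

end DivisorsBelow

theorem excSet_facts_general (n a : ℕ)
    (ha : a ∈ excSet (lspec n)) :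
    (∃ p : ℕ, p.Prime ∧ p ∣ a ∧ p < a) ∧ ¬ a.Prime ∧
      (∀ d : ℕ, d ∣ a → d ≠ a → d ∈ odds (lspec n)) ∧
      IsLeast (qSet (sSup (odds (lspec n)) * a))
        ((a : ℚ) / ((sSup (odds (lspec n)) : ℕ) : ℚ)) := by
  obtain ⟨⟨b, hb, c, hc, rfl⟩, -, hT⟩ := ha
  have hblt := ((DivisorsBelow.mem_iff hT).mp hb).2
  have hclt := ((DivisorsBelow.mem_iff hT).mp hc).2
  obtain ⟨p, hp, hpa, hplt⟩ := Nat.exists_prime_dvd_lt_of_mul_eq rfl hblt hclt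
  exact ⟨⟨p, hp, hpa, hplt⟩, Nat.not_prime_of_dvd_of_lt hpa hp.two_le hplt,
    fun _ => DivisorsBelow.mem_of_dvd hT (by omega), DivisorsBelow.isLeast_qSet hT hb hb.2.pos⟩

/-- Basic facts about elements of the exceptional set of a balanced spectrum:
(i) `a` has a proper prime factor (so `a` is not prime); (ii) every proper divisor of `a`
lies in `S₁`; (iii) `a / m₁ = q(m₁ · a)`. -/
theorem excSet_facts (n a : ℕ) (hn : 0 < n) (hb : balancedSet (lspec n))
    (ha : a ∈ excSet (lspec n)) :
    (∃ p : ℕ, p.Prime ∧ p ∣ a ∧ p < a) ∧ ¬ a.Prime ∧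
      (∀ d : ℕ, d ∣ a → d ≠ a → d ∈ odds (lspec n)) ∧
      IsLeast (qSet (sSup (odds (lspec n)) * a))
        ((a : ℚ) / ((sSup (odds (lspec n)) : ℕ) : ℚ)) :=
  excSet_facts_general n a ha
end

section
/- Let n be a positive integer such that S = lspec(n) is balanced, and let p be any prime. Then p^(ε_p) divides every element of E(S), where ε_p is the excessive index of p with respect to S. -/
/-- For every prime `p`, `p^(ε_p)` divides every element of the exceptional set of a
balanced spectrum. -/
theorem excIdx_pow_dvd (n p : ℕ) (hn : 0 < n) (hb : balancedSet (lspec n))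
    (hp : p.Prime) :
    ∀ a ∈ excSet (lspec n), p ^ excIdx (lspec n) p ∣ a := by
  intro a ha
  obtain ⟨⟨b, hb1, c, hc1, habc⟩, hgt, hdiv⟩ := ha
  have hle : ∀ l ∈ lspec n, l ≤ n := by
    intro l hl
    obtain ⟨hl0, x, hx0, hsum⟩ := hl
    calc l = ∑ _i ∈ Finset.range l, 1 := by simp
    _ ≤ ∑ i ∈ Finset.range l, (x + i) := Finset.sum_le_sum (fun i _ => by omega)
    _ = n := hsum
  have h1 : (1 : ℕ) ∈ odds (lspec n) :=
    ⟨⟨one_pos, n, hn, by simp⟩, odd_one⟩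
  have hbdd : BddAbove (odds (lspec n)) :=
    ⟨n, fun x hx => hle x hx.1⟩
  have hm1 : sSup (odds (lspec n)) ∈ odds (lspec n) :=
    Nat.sSup_mem ⟨1, h1⟩ hbdd
  have hm1pos : 0 < sSup (odds (lspec n)) := hm1.1.1
  have hapos : 0 < a := by
    have := hb1.1.1; have := hc1.1.1
    subst habc; positivity
  -- gamma membership
  have hK0 : (0 : ℕ) ∈ {k | p ^ k ∈ odds (lspec n)} := by
    simpa using h1
  have hKbdd : BddAbove {k | p ^ k ∈ odds (lspec n)} := by
    refine ⟨n, fun k hk => ?_⟩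
    have h1 : p ^ k ≤ n := hle _ hk.1
    have h2 : k < p ^ k := Nat.lt_pow_self (n := k) hp.one_lt
    omega
  have hg : p ^ gammaIdx (lspec n) p ∈ odds (lspec n) :=
    Nat.sSup_mem ⟨0, hK0⟩ hKbdd
  rw [← hdiv] at hg
  obtain ⟨hdvd, _⟩ := hg
  have hne : sSup (odds (lspec n)) * a ≠ 0 := by positivity
  have hle2 : gammaIdx (lspec n) p ≤ (sSup (odds (lspec n)) * a).factorization p :=
    (Nat.Prime.pow_dvd_iff_le_factorization hp hne).mp hdvd
  rw [Nat.factorization_mul hm1pos.ne' hapos.ne'] at hle2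
  simp only [Finsupp.coe_add, Pi.add_apply] at hle2
  rw [Nat.Prime.pow_dvd_iff_le_factorization hp hapos.ne']
  unfold excIdx muIdx at *
  omega
end
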